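/- Let m ≥ 1 and let (X_j, Y_j, v, w) be a representation datum. Then for every integer i ≥ 1, w·A^i·v = (λ₀ + λ₁ + ⋯ + λ_{m−1})·Tr(A^i), where A = Y_{m−1}⋯Y₁Y₀. -/
import Mathlib


open Matrix

namespace CM

noncomputable section

variable {α : ℕ → ℕ}

/-- Reindex a square complex matrix along an equality of sizes. -/
def recast {a b : ℕ} (h : a = b) (M : Matrix (Fin a) (Fin a) ℂ) :
    Matrix (Fin b) (Fin b) ℂ :=
  M.submatrix (Fin.cast h.symm) (Fin.cast h.symm)

/-- `yprod Y k = Y (k-1) * ⋯ * Y 1 * Y 0`. -/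
def yprod (Y : ∀ i : ℕ, Matrix (Fin (α (i + 1))) (Fin (α i)) ℂ) :
    (k : ℕ) → Matrix (Fin (α k)) (Fin (α 0)) ℂ
  | 0 => 1
  | k + 1 => Y k * yprod Y k

/-- `xprod X k = X 0 * X 1 * ⋯ * X (k-1)`. -/
def xprod (X : ∀ i : ℕ, Matrix (Fin (α i)) (Fin (α (i + 1))) ℂ) :
    (k : ℕ) → Matrix (Fin (α 0)) (Fin (α k)) ℂ
  | 0 => 1
  | k + 1 => xprod X k * X k

/-- `ysegFrom Y i k = Y (i+k-1) * ⋯ * Y (i+1) * Y i`. -/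
def ysegFrom (Y : ∀ i : ℕ, Matrix (Fin (α (i + 1))) (Fin (α i)) ℂ) (i : ℕ) :
    (k : ℕ) → Matrix (Fin (α (i + k))) (Fin (α i)) ℂ
  | 0 => (1 : Matrix (Fin (α i)) (Fin (α i)) ℂ)
  | k + 1 => Y (i + k) * ysegFrom Y i k

/-- `xsegFrom X i k = X i * X (i+1) * ⋯ * X (i+k-1)`. -/
def xsegFrom (X : ∀ i : ℕ, Matrix (Fin (α i)) (Fin (α (i + 1))) ℂ) (i : ℕ) :
    (k : ℕ) → Matrix (Fin (α i)) (Fin (α (i + k))) ℂ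
  | 0 => (1 : Matrix (Fin (α i)) (Fin (α i)) ℂ)
  | k + 1 => xsegFrom X i k * X (i + k)

/-- A tuple `(X_i, Y_i, v, w)` of representation data for the framed cyclic quiver with
`m = p + 1` vertices `0, 1, …, p` (only the components with index `≤ p` are meaningful;
the remaining ones are required to vanish where relevant). -/
structure Datum (α : ℕ → ℕ) where
  X : ∀ i : ℕ, Matrix (Fin (α i)) (Fin (α (i + 1))) ℂ
  Y : ∀ i : ℕ, Matrix (Fin (α (i + 1))) (Fin (α i)) ℂ
  v : Fin (α 0) → ℂ
  w : Fin (α 0) → ℂ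

/-- The relations (qv1)–(qv2) for the deformed preprojective algebra of the framed
cyclic quiver with `m = p + 1` vertices. -/
def IsRepDatum (p : ℕ) (lam : ℕ → ℂ) (h0 : α (p + 1) = α 0) (d : Datum α) : Prop :=
  d.X 0 * d.Y 0 - recast h0 (d.Y p * d.X p) + vecMulVec d.v d.w
      = lam 0 • (1 : Matrix (Fin (α 0)) (Fin (α 0)) ℂ) ∧
    ∀ j : ℕ, j < p → d.X (j + 1) * d.Y (j + 1) - d.Y j * d.X j = lam (j + 1) • 1

/-- `A = Y_{m-1} ⋯ Y_1 Y_0`, as a square matrix at the vertex `0`. -/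
def Amat (p : ℕ) (h0 : α (p + 1) = α 0)
    (Y : ∀ i : ℕ, Matrix (Fin (α (i + 1))) (Fin (α i)) ℂ) :
    Matrix (Fin (α 0)) (Fin (α 0)) ℂ :=
  (yprod Y (p + 1)).submatrix (Fin.cast h0.symm) id

/-- `B = X_0 X_1 ⋯ X_{m-1}`, as a square matrix at the vertex `0`. -/
def Bmat (p : ℕ) (h0 : α (p + 1) = α 0)
    (X : ∀ i : ℕ, Matrix (Fin (α i)) (Fin (α (i + 1))) ℂ) :
    Matrix (Fin (α 0)) (Fin (α 0)) ℂ :=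
  (xprod X (p + 1)).submatrix id (Fin.cast h0.symm)

/-- `C_k = Y_{m-1} ⋯ Y_{m-k} X_{m-k} ⋯ X_{m-1}` (for `k ≤ m`; junk value `1` otherwise),
as a square matrix at the vertex `0`; `C_0 = Id`. -/
def Cmat (p : ℕ) (h0 : α (p + 1) = α 0)
    (X : ∀ i : ℕ, Matrix (Fin (α i)) (Fin (α (i + 1))) ℂ)
    (Y : ∀ i : ℕ, Matrix (Fin (α (i + 1))) (Fin (α i)) ℂ) (k : ℕ) :
    Matrix (Fin (α 0)) (Fin (α 0)) ℂ :=
  if h : k ≤ p + 1 then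
    recast ((congrArg α (by omega : p + 1 - k + k = p + 1)).trans h0)
      (ysegFrom Y (p + 1 - k) k * xsegFrom X (p + 1 - k) k)
  else 1

/-- `Y_{m-1} ⋯ Y_{i+1}` viewed as a matrix from vertex `i+1` to vertex `0` (zero for `i > p`). -/
def ycap (p : ℕ) (h0 : α (p + 1) = α 0)
    (Y : ∀ i : ℕ, Matrix (Fin (α (i + 1))) (Fin (α i)) ℂ) (i : ℕ) :
    Matrix (Fin (α 0)) (Fin (α (i + 1))) ℂ :=
  if h : i ≤ p then
    (ysegFrom Y (i + 1) (p - i)).submatrix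
      (Fin.cast (h0.symm.trans (congrArg α (by omega : p + 1 = i + 1 + (p - i))))) id
  else 0

/-- `X_{i+1} ⋯ X_{m-1}` viewed as a matrix from vertex `0` to vertex `i+1` (zero for `i > p`). -/
def xcap (p : ℕ) (h0 : α (p + 1) = α 0)
    (X : ∀ i : ℕ, Matrix (Fin (α i)) (Fin (α (i + 1))) ℂ) (i : ℕ) :
    Matrix (Fin (α (i + 1))) (Fin (α 0)) ℂ :=
  if h : i ≤ p then
    (xsegFrom X (i + 1) (p - i)).submatrix id
      (Fin.cast (h0.symm.trans (congrArg α (by omega : p + 1 = i + 1 + (p - i)))))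
  else 0

/-- The transformation `Ψ_{k,μ}`:
`X_i ↦ X_i + μ • Y_{i-1} ⋯ Y_0 (Y_{m-1} ⋯ Y_0)^{k-1} Y_{m-1} ⋯ Y_{i+1}`. -/
def psiT (p : ℕ) (h0 : α (p + 1) = α 0) (k : ℕ) (μ : ℂ) (d : Datum α) : Datum α where
  X := fun i => d.X i + μ • (yprod d.Y i * Amat p h0 d.Y ^ (k - 1) * ycap p h0 d.Y i)
  Y := d.Y
  v := d.v
  w := d.w

/-- The transformation `Φ_{k,ν}`:
`Y_i ↦ Y_i + ν • X_{i+1} ⋯ X_{m-1} (X_0 ⋯ X_{m-1})^{k-1} X_0 ⋯ X_{i-1}`. -/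
def phiT (p : ℕ) (h0 : α (p + 1) = α 0) (k : ℕ) (ν : ℂ) (d : Datum α) : Datum α where
  X := d.X
  Y := fun i => d.Y i + ν • (xcap p h0 d.X i * Bmat p h0 d.X ^ (k - 1) * xprod d.X i)
  v := d.v
  w := d.w

/-- Base change by a family of (invertible) matrices `g_i`. -/
def bcT (p : ℕ) (g : ∀ i : ℕ, Matrix (Fin (α i)) (Fin (α i)) ℂ) (d : Datum α) : Datum α where
  X := fun i => if i ≤ p then g i * d.X i * (g (i + 1))⁻¹ else d.X i
  Y := fun i => if i ≤ p then g (i + 1) * d.Y i * (g i)⁻¹ else d.Y i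
  v := g 0 *ᵥ d.v
  w := vecMul d.w (g 0)⁻¹

/-- One elementary move: a `Ψ_{k,μ}`, a `Φ_{k,ν}`, or a base change. -/
def Step (p : ℕ) (h0 : α (p + 1) = α 0) (d d' : Datum α) : Prop :=
  (∃ k : ℕ, ∃ μ : ℂ, 1 ≤ k ∧ d' = psiT p h0 k μ d) ∨
  (∃ k : ℕ, ∃ ν : ℂ, 1 ≤ k ∧ d' = phiT p h0 k ν d) ∨
  (∃ g : ∀ i : ℕ, Matrix (Fin (α i)) (Fin (α i)) ℂ,
      (∀ i, IsUnit (g i)) ∧ g (p + 1) = recast h0.symm (g 0) ∧ d' = bcT p g d)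

/-- `λ` is generic: `λ·β ≠ 0` for every root `β` of the affine quiver of type `Ã_{m-1}`. -/
def Generic (p : ℕ) (lam : ℕ → ℂ) : Prop :=
  (∑ t ∈ Finset.range (p + 1), lam t) ≠ 0 ∧
    ∀ i j : ℕ, 1 ≤ i → i ≤ j → j ≤ p → ∀ k : ℤ,
      (∑ t ∈ Finset.Icc i j, lam t) + (k : ℂ) * ∑ t ∈ Finset.range (p + 1), lam t ≠ 0

/-! ### Auxiliary machinery for Statement 11 -/

/-- Rectangular recast of a matrix along equalities of both dimensions. -/
def rcr {a a' b b' : ℕ} (ha : a = a') (hb : b = b') (M : Matrix (Fin a) (Fin b) ℂ) :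
    Matrix (Fin a') (Fin b') ℂ :=
  M.submatrix (Fin.cast ha.symm) (Fin.cast hb.symm)

lemma rcr_refl {a b : ℕ} (ha : a = a) (hb : b = b) (M : Matrix (Fin a) (Fin b) ℂ) :
    rcr ha hb M = M := rfl

lemma rcr_rcr {a a' a'' b b' b'' : ℕ} (ha : a = a') (hb : b = b') (ha' : a' = a'')
    (hb' : b' = b'') (M : Matrix (Fin a) (Fin b) ℂ) :
    rcr ha' hb' (rcr ha hb M) = rcr (ha.trans ha') (hb.trans hb') M := by
  subst ha hb ha' hb'; rfl

lemma rcr_mul {a a' b b' c c' : ℕ} (ha : a = a') (hb : b = b') (hc : c = c')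
    (M : Matrix (Fin a) (Fin b) ℂ) (N : Matrix (Fin b) (Fin c) ℂ) :
    rcr ha hb M * rcr hb hc N = rcr ha hc (M * N) := by
  subst ha hb hc; rfl

lemma rcr_mul_right {a a' b c : ℕ} (ha : a = a') (M : Matrix (Fin a) (Fin b) ℂ)
    (N : Matrix (Fin b) (Fin c) ℂ) :
    rcr ha rfl M * N = rcr ha rfl (M * N) := by
  subst ha; rfl

lemma mul_rcr_left {a b c c' : ℕ} (hc : c = c') (M : Matrix (Fin a) (Fin b) ℂ)
    (N : Matrix (Fin b) (Fin c) ℂ) :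
    M * rcr rfl hc N = rcr rfl hc (M * N) := by
  subst hc; rfl

lemma cast_Y (Y : ∀ i : ℕ, Matrix (Fin (α (i + 1))) (Fin (α i)) ℂ) {a b : ℕ} (h : a = b) :
    Y b = rcr (show α (a + 1) = α (b + 1) by rw [h]) (show α a = α b by rw [h]) (Y a) := by
  subst h; rfl

lemma ysegFrom_congr (Y : ∀ i : ℕ, Matrix (Fin (α (i + 1))) (Fin (α i)) ℂ) (j : ℕ)
    {k k' : ℕ} (h : k = k') :
    ysegFrom Y j k' = rcr (show α (j + k) = α (j + k') by rw [h]) rfl (ysegFrom Y j k) := by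
  subst h; rfl

lemma ysegFrom_peel (Y : ∀ i : ℕ, Matrix (Fin (α (i + 1))) (Fin (α i)) ℂ) (j k : ℕ) :
    ysegFrom Y j (k + 1)
      = rcr (congrArg α (by omega : j + 1 + k = j + (k + 1))) rfl
          (ysegFrom Y (j + 1) k * Y j) := by
  induction k with
  | zero =>
    show Y (j + 0) * (1 : Matrix (Fin (α (j + 0))) (Fin (α (j + 0))) ℂ) = _
    rw [Matrix.mul_one]
    show Y j = rcr _ rfl ((1 : Matrix (Fin (α (j + 1))) (Fin (α (j + 1))) ℂ) * Y j)
    rw [Matrix.one_mul]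
    exact (rcr_refl _ rfl (Y j)).symm
  | succ k ih =>
    show Y (j + (k + 1)) * ysegFrom Y j (k + 1)
      = rcr _ rfl ((Y (j + 1 + k) * ysegFrom Y (j + 1) k) * Y j)
    rw [ih, cast_Y Y (show j + 1 + k = j + (k + 1) by omega), rcr_mul, ← Matrix.mul_assoc]

/-- `Y_p ⋯ Y_j`, viewed as a matrix from vertex `j` to vertex `0`. -/
def mcap (p : ℕ) (h0 : α (p + 1) = α 0)
    (Y : ∀ i : ℕ, Matrix (Fin (α (i + 1))) (Fin (α i)) ℂ) (j : ℕ) :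
    Matrix (Fin (α 0)) (Fin (α j)) ℂ :=
  if h : j ≤ p + 1 then
    rcr ((congrArg α (by omega : j + (p + 1 - j) = p + 1)).trans h0) rfl
      (ysegFrom Y j (p + 1 - j))
  else 0

lemma mcap_peel (p : ℕ) (h0 : α (p + 1) = α 0)
    (Y : ∀ i : ℕ, Matrix (Fin (α (i + 1))) (Fin (α i)) ℂ) {j : ℕ} (hj : j ≤ p) :
    mcap p h0 Y (j + 1) * Y j = mcap p h0 Y j := by
  unfold mcap
  rw [dif_pos (by omega : j + 1 ≤ p + 1), dif_pos (by omega : j ≤ p + 1)]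
  rw [rcr_mul_right,
    ysegFrom_congr Y (j + 1) (show p - j = p + 1 - (j + 1) by omega),
    ysegFrom_congr Y j (show p - j + 1 = p + 1 - j by omega),
    ysegFrom_peel Y j (p - j), rcr_mul_right, rcr_rcr, rcr_rcr, rcr_rcr]

lemma mcap_mul_yprod (p : ℕ) (h0 : α (p + 1) = α 0)
    (Y : ∀ i : ℕ, Matrix (Fin (α (i + 1))) (Fin (α i)) ℂ) {j : ℕ} (hj : j ≤ p + 1) :
    mcap p h0 Y j * yprod Y j = Amat p h0 Y := by
  have H : ∀ t j, j + t = p + 1 → mcap p h0 Y j * yprod Y j = Amat p h0 Y := by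
    intro t
    induction t with
    | zero =>
      intro j ht
      have hj' : j = p + 1 := by omega
      subst hj'
      unfold mcap
      rw [dif_pos (le_refl (p + 1)),
        ysegFrom_congr Y (p + 1) (show 0 = p + 1 - (p + 1) by omega), rcr_rcr,
        rcr_mul_right]
      show rcr _ rfl ((1 : Matrix (Fin (α (p + 1))) (Fin (α (p + 1))) ℂ) * yprod Y (p + 1))
        = Amat p h0 Y
      rw [Matrix.one_mul]
      rfl
    | succ t ih =>
      intro j ht
      have hj' : j ≤ p := by omega
      rw [← mcap_peel p h0 Y hj', Matrix.mul_assoc]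
      exact ih (j + 1) (by omega)
  exact H (p + 1 - j) j (by omega)

lemma mcap_last (p : ℕ) (h0 : α (p + 1) = α 0)
    (Y : ∀ i : ℕ, Matrix (Fin (α (i + 1))) (Fin (α i)) ℂ) :
    mcap p h0 Y p = rcr h0 rfl (Y p) := by
  unfold mcap
  rw [dif_pos (by omega : p ≤ p + 1),
    ysegFrom_congr Y p (show 1 = p + 1 - p by omega), rcr_rcr]
  show rcr _ rfl (Y (p + 0) * (1 : Matrix (Fin (α (p + 0))) (Fin (α (p + 0))) ℂ))
    = rcr h0 rfl (Y p)
  rw [Matrix.mul_one]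
  rfl

lemma sum_range_split (p : ℕ) (lam : ℕ → ℂ) :
    ∑ t ∈ Finset.range (p + 1), lam t = lam 0 + ∑ t ∈ Finset.Icc 1 p, lam t := by
  induction p with
  | zero => simp
  | succ q ihq =>
    rw [Finset.sum_range_succ, ihq, Finset.sum_Icc_succ_top (show 1 ≤ q + 1 by omega)]
    ring

lemma trace_mul_vecMulVec {a : ℕ} (M : Matrix (Fin a) (Fin a) ℂ) (v w : Fin a → ℂ) :
    (M * vecMulVec v w).trace = w ⬝ᵥ (M *ᵥ v) := by
  simp only [Matrix.trace, Matrix.diag, Matrix.mul_apply, Matrix.vecMulVec_apply,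
    dotProduct, Matrix.mulVec, Finset.mul_sum]
  exact Finset.sum_congr rfl fun i _ => Finset.sum_congr rfl fun k _ => by ring

/-- For a representation datum (`m = p + 1 ≥ 1`) and every `i ≥ 1`,
`w·A^i·v = (λ₀ + ⋯ + λ_{m−1})·Tr(A^i)`, where `A = Y_{m−1} ⋯ Y₁ Y₀`. -/
theorem statement11 (p : ℕ) (α : ℕ → ℕ) (lam : ℕ → ℂ) (h0 : α (p + 1) = α 0)
    (d : Datum α) (hd : IsRepDatum p lam h0 d) (i : ℕ) (hi : 1 ≤ i) :
    d.w ⬝ᵥ (Amat p h0 d.Y ^ i *ᵥ d.v)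
      = (∑ t ∈ Finset.range (p + 1), lam t) * (Amat p h0 d.Y ^ i).trace := by
  obtain ⟨n, rfl⟩ : ∃ n, i = n + 1 := ⟨i - 1, by omega⟩
  set A := Amat p h0 d.Y with hA
  -- the telescoping identity for S_j = Tr(A^n ⋅ (Y_p⋯Y_j) ⋅ X_j Y_j ⋅ (Y_{j-1}⋯Y_0))
  have key : ∀ j, j ≤ p →
      (A ^ n * mcap p h0 d.Y j * (d.X j * d.Y j) * yprod d.Y j).trace
        = (A ^ n * mcap p h0 d.Y 0 * (d.X 0 * d.Y 0) * yprod d.Y 0).trace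
          + (∑ t ∈ Finset.Icc 1 j, lam t) * (A ^ (n + 1)).trace := by
    intro j
    induction j with
    | zero => intro _; simp
    | succ j ih =>
      intro hj
      have hrel : d.X (j + 1) * d.Y (j + 1) = lam (j + 1) • 1 + d.Y j * d.X j :=
        eq_add_of_sub_eq (hd.2 j (by omega))
      rw [hrel, Matrix.mul_add, Matrix.add_mul, Matrix.trace_add]
      have h1 : (A ^ n * mcap p h0 d.Y (j + 1)
          * (lam (j + 1) • (1 : Matrix (Fin (α (j + 1))) (Fin (α (j + 1))) ℂ))
          * yprod d.Y (j + 1)).trace = lam (j + 1) * (A ^ (n + 1)).trace := by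
        rw [Matrix.mul_smul, Matrix.mul_one, Matrix.smul_mul, Matrix.trace_smul, smul_eq_mul,
          Matrix.mul_assoc, mcap_mul_yprod p h0 d.Y (by omega), ← hA, ← pow_succ]
      have h2 : A ^ n * mcap p h0 d.Y (j + 1) * (d.Y j * d.X j) * yprod d.Y (j + 1)
          = A ^ n * mcap p h0 d.Y j * (d.X j * d.Y j) * yprod d.Y j := by
        rw [← mcap_peel p h0 d.Y (show j ≤ p by omega)]
        show A ^ n * mcap p h0 d.Y (j + 1) * (d.Y j * d.X j) * (d.Y j * yprod d.Y j)
          = A ^ n * (mcap p h0 d.Y (j + 1) * d.Y j) * (d.X j * d.Y j) * yprod d.Y j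
        simp only [Matrix.mul_assoc]
      rw [h1, h2, ih (by omega), Finset.sum_Icc_succ_top (show 1 ≤ j + 1 by omega)]
      ring
  -- S_0 in terms of A^{n+1}
  have e0 : mcap p h0 d.Y 0 = A := by
    have h := mcap_mul_yprod p h0 d.Y (show 0 ≤ p + 1 by omega)
    rwa [show yprod d.Y 0 = (1 : Matrix (Fin (α 0)) (Fin (α 0)) ℂ) from rfl, mul_one, ← hA]
      at h
  have hS0 : (A ^ n * mcap p h0 d.Y 0 * (d.X 0 * d.Y 0) * yprod d.Y 0).trace
      = (A ^ (n + 1) * (d.X 0 * d.Y 0)).trace := by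
    rw [e0, show yprod d.Y 0 = (1 : Matrix (Fin (α 0)) (Fin (α 0)) ℂ) from rfl,
      Matrix.mul_one, ← pow_succ]
  -- the vertex-0 relation, rearranged
  have hrel0 : d.X 0 * d.Y 0
      = lam 0 • 1 + recast h0 (d.Y p * d.X p) - vecMulVec d.v d.w := by
    rw [← hd.1]; abel
  -- identifying the recast term with S_p, via cyclicity of the trace
  have hXY : rcr rfl h0 (d.X p) * rcr h0 rfl (d.Y p) = d.X p * d.Y p :=
    (rcr_mul rfl h0 rfl (d.X p) (d.Y p)).trans (rcr_refl rfl rfl _)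
  have hrecast : recast h0 (d.Y p * d.X p)
      = rcr h0 rfl (d.Y p) * rcr rfl h0 (d.X p) :=
    (rcr_mul h0 rfl h0 (d.Y p) (d.X p)).symm
  have hUV : rcr h0 rfl (d.Y p) * yprod d.Y p = A := by
    rw [← mcap_last p h0 d.Y]
    exact (mcap_mul_yprod p h0 d.Y (by omega)).trans hA.symm
  have hSp : (A ^ (n + 1) * recast h0 (d.Y p * d.X p)).trace
      = (A ^ n * mcap p h0 d.Y p * (d.X p * d.Y p) * yprod d.Y p).trace := by
    rw [hrecast, mcap_last p h0 d.Y, ← hXY]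
    calc (A ^ (n + 1) * (rcr h0 rfl (d.Y p) * rcr rfl h0 (d.X p))).trace
        = ((rcr h0 rfl (d.Y p) * rcr rfl h0 (d.X p)) * A ^ (n + 1)).trace :=
          Matrix.trace_mul_comm _ _
      _ = (rcr h0 rfl (d.Y p) * (rcr rfl h0 (d.X p) * (A * A ^ n))).trace := by
          rw [pow_succ']; simp only [Matrix.mul_assoc]
      _ = ((rcr h0 rfl (d.Y p) * (rcr rfl h0 (d.X p) * A)) * A ^ n).trace := by
          simp only [Matrix.mul_assoc]
      _ = (A ^ n * (rcr h0 rfl (d.Y p) * (rcr rfl h0 (d.X p) * A))).trace :=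
          Matrix.trace_mul_comm _ _
      _ = (A ^ n * rcr h0 rfl (d.Y p)
            * (rcr rfl h0 (d.X p) * rcr h0 rfl (d.Y p)) * yprod d.Y p).trace := by
          have hgen : ∀ B : Matrix (Fin (α 0)) (Fin (α 0)) ℂ,
              B * (rcr h0 rfl (d.Y p) * (rcr rfl h0 (d.X p) * A))
                = B * rcr h0 rfl (d.Y p) * (rcr rfl h0 (d.X p) * rcr h0 rfl (d.Y p))
                  * yprod d.Y p := by
            intro B
            rw [← hUV]
            simp only [Matrix.mul_assoc]
          rw [hgen]
  -- trace of the rank-one part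
  have k2 : (A ^ (n + 1) * (d.X 0 * d.Y 0)).trace
      = lam 0 * (A ^ (n + 1)).trace
        + (A ^ (n + 1) * recast h0 (d.Y p * d.X p)).trace
        - d.w ⬝ᵥ (A ^ (n + 1) *ᵥ d.v) := by
    rw [hrel0, Matrix.mul_sub, Matrix.mul_add, Matrix.trace_sub, Matrix.trace_add,
      Matrix.mul_smul, Matrix.mul_one, Matrix.trace_smul, smul_eq_mul,
      trace_mul_vecMulVec]
  have hsum := sum_range_split p lam
  have k1 := key p le_rfl
  rw [hsum]
  linear_combination k2 + k1 + hS0 + hSp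

end
end CM
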